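/- arXiv:2503.14180 — 2 statements merged into one kernel-verified Lean document; each statement's English description precedes it below -/
import Mathlib

section
/- For every positive integer n, c_n equals the reciprocal of the spectral norm of Z_n, i.e. c_n = ‖Z_n‖₂^{-1}. -/
open Matrix

/-- `K n` is the set of nonsingular `n×n` lower triangular `(0,1)`-matrices. -/
def K (n : ℕ) : Set (Matrix (Fin n) (Fin n) ℝ) :=
  {X | (∀ i j : Fin n, i < j → X i j = 0) ∧ (∀ i j : Fin n, X i j = 0 ∨ X i j = 1) ∧
    X.det ≠ 0}

/-- `μ` is an eigenvalue of the real matrix `M`. -/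
def HasEigen {n : ℕ} (M : Matrix (Fin n) (Fin n) ℝ) (μ : ℝ) : Prop :=
  ∃ v : Fin n → ℝ, v ≠ 0 ∧ M.mulVec v = μ • v

/-- Hong and Loewy's number `c n`: the minimum of all eigenvalues of `X * Xᵀ`
over `X ∈ K n`. -/
noncomputable def c (n : ℕ) : ℝ :=
  sInf {μ : ℝ | ∃ X ∈ K n, HasEigen (X * Xᵀ) μ}

/-- The `n×n` matrix `Z_n` (1-based indices `i' = i+1`, `j' = j+1`). -/
noncomputable def Z (n : ℕ) : Matrix (Fin n) (Fin n) ℝ := fun i j =>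
  if i = j then
    1 + ∑ k ∈ Finset.Icc (i.1 + 2) n, ((Nat.fib (k - (i.1 + 1)) : ℝ)) ^ 2
  else if i < j then
    (-1 : ℝ) ^ (j.1 - i.1) * ((Nat.fib (j.1 - i.1) : ℝ) +
      ∑ k ∈ Finset.Icc (j.1 + 2) n,
        (Nat.fib (k - (i.1 + 1)) : ℝ) * (Nat.fib (k - (j.1 + 1)) : ℝ))
  else
    (-1 : ℝ) ^ (i.1 - j.1) * ((Nat.fib (i.1 - j.1) : ℝ) +
      ∑ k ∈ Finset.Icc (i.1 + 2) n,
        (Nat.fib (k - (i.1 + 1)) : ℝ) * (Nat.fib (k - (j.1 + 1)) : ℝ))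

/-- The spectral norm of a real square matrix `M`: its largest singular value,
i.e. the supremum of the square roots of the eigenvalues of `Mᵀ * M`. -/
noncomputable def specNorm {n : ℕ} (M : Matrix (Fin n) (Fin n) ℝ) : ℝ :=
  sSup {s : ℝ | ∃ μ : ℝ, HasEigen (Mᵀ * M) μ ∧ s = Real.sqrt μ}

lemma inner_eq_dot {n : ℕ} (x y : EuclideanSpace ℝ (Fin n)) :
    (inner ℝ x y : ℝ) = (x : Fin n → ℝ) ⬝ᵥ (y : Fin n → ℝ) := by
  simp [PiLp.inner_apply, dotProduct, RCLike.inner_apply, mul_comm]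

lemma sum_dot {n : ℕ} {ι : Type*} (s : Finset ι) (f : ι → (Fin n → ℝ)) (v : Fin n → ℝ) :
    (∑ i ∈ s, f i) ⬝ᵥ v = ∑ i ∈ s, f i ⬝ᵥ v := by
  simp only [dotProduct, Finset.sum_apply, Finset.sum_mul]
  exact Finset.sum_comm

lemma dot_sum {n : ℕ} {ι : Type*} (s : Finset ι) (v : Fin n → ℝ) (f : ι → (Fin n → ℝ)) :
    v ⬝ᵥ (∑ i ∈ s, f i) = ∑ i ∈ s, v ⬝ᵥ f i := by
  simp only [dotProduct, Finset.sum_apply, Finset.mul_sum]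
  exact Finset.sum_comm

lemma mulVec_sum' {n : ℕ} {ι : Type*} (s : Finset ι) (S : Matrix (Fin n) (Fin n) ℝ)
    (f : ι → (Fin n → ℝ)) : S.mulVec (∑ i ∈ s, f i) = ∑ i ∈ s, S.mulVec (f i) := by
  simp only [← Matrix.mulVecLin_apply, map_sum]

lemma sym_eigen_max {n : ℕ} (hn : 0 < n) (S : Matrix (Fin n) (Fin n) ℝ) (hS : Sᵀ = S) :
    ∃ ν : ℝ, HasEigen S ν ∧ (∀ u : Fin n → ℝ, (S.mulVec u) ⬝ᵥ u ≤ ν * (u ⬝ᵥ u)) ∧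
      (∀ μ, HasEigen S μ → μ ≤ ν) := by
  have hH : S.IsHermitian := by
    rw [Matrix.IsHermitian, conjTranspose_eq_transpose_of_trivial, hS]
  haveI : NeZero n := ⟨hn.ne'⟩
  set b := hH.eigenvectorBasis with hb
  set vals := hH.eigenvalues with hvals
  set w : Fin n → (Fin n → ℝ) := fun i => ⇑(b i) with hw
  have hmv : ∀ i, S.mulVec (w i) = vals i • w i := fun i => hH.mulVec_eigenvectorBasis i
  have ho : ∀ i j, w i ⬝ᵥ w j = if i = j then 1 else 0 := by
    intro i j
    have := (orthonormal_iff_ite (𝕜 := ℝ)).mp b.orthonormal i j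
    rw [inner_eq_dot] at this
    exact this
  have hrepr : ∀ u : Fin n → ℝ, ∑ i, (w i ⬝ᵥ u) • w i = u := by
    intro u
    have h2 := b.sum_repr' (x := WithLp.toLp 2 u)
    calc ∑ i, (w i ⬝ᵥ u) • w i
        = ∑ i, (inner (𝕜 := ℝ) (b i) (WithLp.toLp 2 u)) • w i := by
          refine Finset.sum_congr rfl fun i _ => ?_
          rw [inner_eq_dot]
      _ = u := by simpa using congrArg WithLp.ofLp h2
  have key2 : ∀ c : Fin n → ℝ, (∑ i, c i • w i) ⬝ᵥ (∑ j, c j • w j) = ∑ i, c i ^ 2 := by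
    intro c
    rw [sum_dot]
    refine Finset.sum_congr rfl fun i _ => ?_
    rw [smul_dotProduct, dot_sum]
    rw [Finset.sum_eq_single i]
    · rw [dotProduct_smul, ho i i, if_pos rfl]; simp; ring
    · intro j _ hj
      rw [dotProduct_smul, ho i j, if_neg (fun h => hj h.symm)]
      simp
    · intro h; exact absurd (Finset.mem_univ i) h
  have keyS : ∀ c : Fin n → ℝ,
      (S.mulVec (∑ i, c i • w i)) ⬝ᵥ (∑ j, c j • w j) = ∑ i, vals i * c i ^ 2 := by
    intro c
    have h1 : S.mulVec (∑ i, c i • w i) = ∑ i, (c i * vals i) • w i := by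
      rw [mulVec_sum']
      refine Finset.sum_congr rfl fun i _ => ?_
      have : S.mulVec (c i • w i) = c i • S.mulVec (w i) := by
        simp only [← Matrix.mulVecLin_apply, _root_.map_smul]
      rw [this, hmv i, smul_smul]
    rw [h1, sum_dot]
    refine Finset.sum_congr rfl fun i _ => ?_
    rw [smul_dotProduct, dot_sum]
    rw [Finset.sum_eq_single i]
    · rw [dotProduct_smul, ho i i, if_pos rfl]; simp; ring
    · intro j _ hj
      rw [dotProduct_smul, ho i j, if_neg (fun h => hj h.symm)]
      simp
    · intro h; exact absurd (Finset.mem_univ i) h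
  obtain ⟨i0, -, hi0⟩ := Finset.exists_max_image Finset.univ vals ⟨⟨0, hn⟩, Finset.mem_univ _⟩
  refine ⟨vals i0, ⟨w i0, ?_, hmv i0⟩, ?_, ?_⟩
  · intro h0
    have : w i0 ⬝ᵥ w i0 = 0 := by rw [h0]; simp
    rw [ho i0 i0, if_pos rfl] at this
    exact one_ne_zero this
  · intro u
    have hu := hrepr u
    calc (S.mulVec u) ⬝ᵥ u = ∑ i, vals i * (w i ⬝ᵥ u) ^ 2 := by
          conv_lhs => rw [← hu]
          exact keyS _
      _ ≤ ∑ i, vals i0 * (w i ⬝ᵥ u) ^ 2 := by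
          refine Finset.sum_le_sum fun i _ => ?_
          exact mul_le_mul_of_nonneg_right (hi0 i (Finset.mem_univ i)) (sq_nonneg _)
      _ = vals i0 * (u ⬝ᵥ u) := by
          rw [← Finset.mul_sum]
          congr 1
          conv_rhs => rw [← hu]
          exact (key2 _).symm
  · rintro μ ⟨v, hv0, hv⟩
    have hex : ∃ i, w i ⬝ᵥ v ≠ 0 := by
      by_contra h
      push_neg at h
      apply hv0
      rw [← hrepr v]
      exact Finset.sum_eq_zero fun i _ => by rw [h i, zero_smul]
    obtain ⟨i, hi⟩ := hex
    have h1 : w i ⬝ᵥ (S.mulVec v) = (S.mulVec (w i)) ⬝ᵥ v := by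
      rw [Matrix.dotProduct_mulVec, ← Matrix.vecMul_transpose, hS]
    rw [hv, dotProduct_smul, smul_eq_mul, hmv i, smul_dotProduct,
      smul_eq_mul] at h1
    have : μ = vals i := mul_right_cancel₀ hi h1
    exact this.symm ▸ hi0 i (Finset.mem_univ i)

noncomputable def G (m : ℕ) : ℝ := if m = 0 then 1 else (Nat.fib m : ℝ)

lemma G_zero : G 0 = 1 := by simp [G]
lemma G_pos_eq (m : ℕ) (h : 1 ≤ m) : G m = (Nat.fib m : ℝ) := by unfold G; rw [if_neg (by omega)]
lemma G_nonneg (m : ℕ) : 0 ≤ G m := by unfold G; split <;> positivity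

lemma G_identity : ∀ m : ℕ, 1 ≤ m →
    G m = ∑ t ∈ (Finset.range m).filter (fun t => Odd (m - t)), G t := by
  intro m
  induction m using Nat.strong_induction_on with
  | _ m ih =>
    intro hm
    match m, hm with
    | 1, _ =>
      rw [show (Finset.range 1).filter (fun t => Odd (1 - t)) = {0} by decide]
      simp [G]
    | 2, _ =>
      rw [show (Finset.range 2).filter (fun t => Odd (2 - t)) = {1} by decide]
      simp [G]
    | (m+3), _ =>
      have h1 : (Finset.range (m+3)).filter (fun t => Odd (m+3-t))
          = insert (m+2) ((Finset.range (m+1)).filter (fun t => Odd (m+1-t))) := by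
        ext t
        simp only [Finset.mem_filter, Finset.mem_insert, Finset.mem_range, Nat.odd_iff]
        omega
      have h2 : (m+2) ∉ (Finset.range (m+1)).filter (fun t => Odd (m+1-t)) := by
        simp
      rw [h1, Finset.sum_insert h2, ← ih (m+1) (by omega) (by omega)]
      rw [G_pos_eq _ (by omega), G_pos_eq _ (by omega), G_pos_eq _ (by omega)]
      rw [show m+3 = (m+1)+2 by ring, Nat.fib_add_two]
      push_cast
      ring

lemma signed_G (m : ℕ) (hm : 1 ≤ m) :
    (-1:ℝ)^m * G m + ∑ t ∈ (Finset.range m).filter (fun t => Odd (m - t)), (-1:ℝ)^t * G t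
      = 0 := by
  have hsum : ∑ t ∈ (Finset.range m).filter (fun t => Odd (m - t)), (-1:ℝ)^t * G t
      = -(-1:ℝ)^m * ∑ t ∈ (Finset.range m).filter (fun t => Odd (m - t)), G t := by
    rw [Finset.mul_sum]
    refine Finset.sum_congr rfl fun t ht => ?_
    simp only [Finset.mem_filter, Finset.mem_range] at ht
    obtain ⟨a, ha⟩ := ht.2
    have hmt : m = t + (2*a+1) := by omega
    have : (-1:ℝ)^m = -(-1:ℝ)^t := by
      rw [hmt, pow_add, pow_add, pow_mul]
      norm_num
    rw [this]
    ring
  rw [hsum, ← G_identity m hm]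
  ring

noncomputable def Lm (n : ℕ) : Matrix (Fin n) (Fin n) ℝ :=
  fun i j => if j.1 ≤ i.1 then (-1:ℝ)^(i.1-j.1) * G (i.1-j.1) else 0
noncomputable def Fm (n : ℕ) : Matrix (Fin n) (Fin n) ℝ :=
  fun i j => if j.1 ≤ i.1 then G (i.1-j.1) else 0
noncomputable def Dm (n : ℕ) : Matrix (Fin n) (Fin n) ℝ :=
  Matrix.diagonal (fun i => (-1:ℝ)^i.1)
noncomputable def Ym (n : ℕ) : Matrix (Fin n) (Fin n) ℝ :=
  fun i j => if j.1 ≤ i.1 ∧ (i.1 = j.1 ∨ Odd (i.1 - j.1)) then (1:ℝ) else 0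

lemma Dm_mul_Dm (n : ℕ) : Dm n * Dm n = 1 := by
  unfold Dm
  rw [Matrix.diagonal_mul_diagonal]
  convert Matrix.diagonal_one
  rw [← pow_add]
  simp [pow_mul_comm, ← two_mul, pow_mul]

lemma Lm_eq_DFD (n : ℕ) : Lm n = Dm n * Fm n * Dm n := by
  ext i j
  rw [Matrix.mul_apply]
  unfold Dm Lm Fm
  rw [Finset.sum_eq_single j]
  · erw [Matrix.mul_apply]; rw [Finset.sum_eq_single i]
    · rw [Matrix.diagonal_apply_eq, Matrix.diagonal_apply_eq]
      by_cases h : j.1 ≤ i.1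
      · rw [if_pos h, if_pos h]
        have : (-1:ℝ)^(i.1) * (-1:ℝ)^(j.1) = (-1:ℝ)^(i.1-j.1) := by
          rw [← pow_add, show i.1 + j.1 = (i.1-j.1) + 2*j.1 by omega, pow_add, pow_mul]
          norm_num
        rw [← this]
        ring
      · rw [if_neg h, if_neg h]
        ring
    · intro k _ hk
      rw [Matrix.diagonal_apply_ne' _ hk, zero_mul]
    · intro h; exact absurd (Finset.mem_univ i) h
  · intro k _ hk
    rw [Matrix.diagonal_apply_ne _ hk, mul_zero]
  · intro h; exact absurd (Finset.mem_univ j) h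

lemma fin_sum_dite {n : ℕ} (f : Fin n → ℝ) :
    ∑ k : Fin n, f k = ∑ k ∈ Finset.range n, (if h : k < n then f ⟨k, h⟩ else 0) := by
  rw [← Fin.sum_univ_eq_sum_range (fun k => if h : k < n then f ⟨k, h⟩ else 0) n]
  exact Finset.sum_congr rfl fun k _ => by rw [dif_pos k.isLt]

lemma Ym_mul_Lm (n : ℕ) : Ym n * Lm n = 1 := by
  ext i j
  rw [Matrix.mul_apply, fin_sum_dite (fun k => Ym n i k * Lm n k j)]
  by_cases hij : i.1 < j.1
  · rw [Matrix.one_apply_ne (fun h => by rw [h] at hij; omega)]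
    refine Finset.sum_eq_zero fun k hk => ?_
    rw [dif_pos (Finset.mem_range.mp hk)]
    by_cases hki : k ≤ i.1
    · rw [show Lm n ⟨k, Finset.mem_range.mp hk⟩ j = 0 from if_neg (by simp; omega), mul_zero]
    · rw [show Ym n i ⟨k, Finset.mem_range.mp hk⟩ = 0 from if_neg (by simp; omega), zero_mul]
  · push_neg at hij
    have hsub : ∑ k ∈ Finset.range n, (if h : k < n then Ym n i ⟨k, h⟩ * Lm n ⟨k, h⟩ j else 0)
        = ∑ k ∈ Finset.Icc j.1 i.1, (if h : k < n then Ym n i ⟨k, h⟩ * Lm n ⟨k, h⟩ j else 0) := by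
      refine (Finset.sum_subset ?_ ?_).symm
      · intro k hk
        simp only [Finset.mem_Icc] at hk
        exact Finset.mem_range.mpr (lt_of_le_of_lt hk.2 i.isLt)
      · intro k hk hk2
        simp only [Finset.mem_Icc, not_and_or, not_le] at hk2
        rw [dif_pos (Finset.mem_range.mp hk)]
        rcases hk2 with h | h
        · rw [show Lm n ⟨k, Finset.mem_range.mp hk⟩ j = 0 from if_neg (by simp; omega), mul_zero]
        · rw [show Ym n i ⟨k, Finset.mem_range.mp hk⟩ = 0 from if_neg (by simp; omega), zero_mul]
    rw [hsub]
    by_cases heq : i.1 = j.1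
    · have : i = j := Fin.ext heq
      subst this
      rw [Matrix.one_apply_eq]
      rw [show Finset.Icc i.1 i.1 = {i.1} from Finset.Icc_self i.1, Finset.sum_singleton,
        dif_pos i.isLt]
      have h1 : Ym n i ⟨i.1, i.isLt⟩ = 1 := if_pos (by simp)
      have h2 : Lm n ⟨i.1, i.isLt⟩ i = 1 := by
        unfold Lm; rw [if_pos (by simp)]; simp [G_zero]
      rw [h1, h2]; norm_num
    · have hji : j.1 < i.1 := by omega
      rw [Matrix.one_apply_ne (fun h => by rw [h] at heq; omega)]
      rw [← Finset.Ico_insert_right hij, Finset.sum_insert (by simp)]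
      have htop : (if h : i.1 < n then Ym n i ⟨i.1, h⟩ * Lm n ⟨i.1, h⟩ j else 0)
          = (-1:ℝ)^(i.1-j.1) * G (i.1-j.1) := by
        rw [dif_pos i.isLt]
        have h1 : Ym n i ⟨i.1, i.isLt⟩ = 1 := if_pos (by simp)
        have h2 : Lm n ⟨i.1, i.isLt⟩ j = (-1:ℝ)^(i.1-j.1) * G (i.1-j.1) := if_pos (by simpa)
        rw [h1, h2, one_mul]
      rw [htop]
      have hrest : ∑ k ∈ Finset.Ico j.1 i.1,
          (if h : k < n then Ym n i ⟨k, h⟩ * Lm n ⟨k, h⟩ j else 0)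
          = ∑ t ∈ (Finset.range (i.1-j.1)).filter (fun t => Odd (i.1-j.1 - t)),
              (-1:ℝ)^t * G t := by
        rw [Finset.sum_filter]
        refine Finset.sum_nbij' (fun k => k - j.1) (fun t => t + j.1) ?_ ?_ ?_ ?_ ?_
        · intro k hk; simp only [Finset.mem_Ico] at hk; simp; omega
        · intro t ht; simp only [Finset.mem_range] at ht; simp; omega
        · intro k hk; simp only [Finset.mem_Ico] at hk; show k - j.1 + j.1 = k; omega
        · intro t ht; simp only [Finset.mem_range] at ht; show t + j.1 - j.1 = t; omega
        · intro k hk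
          simp only [Finset.mem_Ico] at hk
          have hkn : k < n := lt_trans hk.2 i.isLt
          rw [dif_pos hkn]
          have h2 : Lm n ⟨k, hkn⟩ j = (-1:ℝ)^(k-j.1) * G (k-j.1) := if_pos (by simpa using hk.1)
          have hodd : (Odd (i.1 - k)) ↔ Odd (i.1 - j.1 - (k - j.1)) := by
            rw [Nat.odd_iff, Nat.odd_iff]; omega
          by_cases ho : Odd (i.1 - k)
          · have h1 : Ym n i ⟨k, hkn⟩ = 1 := if_pos ⟨show k ≤ i.1 by omega, Or.inr ho⟩
            rw [h1, h2, if_pos (hodd.mp ho), one_mul]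
          · have h1 : Ym n i ⟨k, hkn⟩ = 0 :=
              if_neg (fun hc => hc.2.elim (fun h => (show i.1 ≠ k by omega) h) ho)
            rw [h1, if_neg (fun hh => ho (hodd.mpr hh)), zero_mul]
      rw [hrest]
      exact signed_G (i.1 - j.1) (by omega)

lemma Hsum (n : ℕ) (i j : Fin n) (hij : i.1 ≤ j.1) :
    ∑ k : Fin n, Lm n k i * Lm n k j
      = (-1:ℝ)^(j.1-i.1) * (G (j.1-i.1) +
          ∑ k ∈ Finset.Icc (j.1+2) n, (Nat.fib (k-(i.1+1)) : ℝ) * (Nat.fib (k-(j.1+1)) : ℝ)) := by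
  rw [fin_sum_dite (fun k => Lm n k i * Lm n k j)]
  have hsub : ∑ k ∈ Finset.range n, (if h : k < n then Lm n ⟨k, h⟩ i * Lm n ⟨k, h⟩ j else 0)
      = ∑ k ∈ Finset.Icc j.1 (n-1), (if h : k < n then Lm n ⟨k, h⟩ i * Lm n ⟨k, h⟩ j else 0) := by
    refine (Finset.sum_subset ?_ ?_).symm
    · intro k hk; simp only [Finset.mem_Icc] at hk
      refine Finset.mem_range.mpr (by omega)
    · intro k hk hk2
      simp only [Finset.mem_Icc, not_and_or, not_le] at hk2
      have hkn := Finset.mem_range.mp hk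
      rw [dif_pos hkn]
      have : Lm n ⟨k, hkn⟩ j = 0 := if_neg (by simp; omega)
      rw [this, mul_zero]
  rw [hsub]
  have hins : Finset.Icc j.1 (n-1) = insert j.1 (Finset.Icc (j.1+1) (n-1)) := by
    ext t
    simp only [Finset.mem_Icc, Finset.mem_insert]
    have := j.isLt
    omega
  rw [hins, Finset.sum_insert (by simp)]
  have htop : (if h : j.1 < n then Lm n ⟨j.1, h⟩ i * Lm n ⟨j.1, h⟩ j else 0)
      = (-1:ℝ)^(j.1-i.1) * G (j.1-i.1) := by
    rw [dif_pos j.isLt]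
    have h1 : Lm n ⟨j.1, j.isLt⟩ i = (-1:ℝ)^(j.1-i.1) * G (j.1-i.1) := if_pos (by simpa)
    have h2 : Lm n ⟨j.1, j.isLt⟩ j = 1 := by
      unfold Lm; rw [if_pos (by simp)]; simp [G_zero]
    rw [h1, h2, mul_one]
  rw [htop]
  have hrest : ∑ k ∈ Finset.Icc (j.1+1) (n-1),
      (if h : k < n then Lm n ⟨k, h⟩ i * Lm n ⟨k, h⟩ j else 0)
      = (-1:ℝ)^(j.1-i.1) *
          ∑ k ∈ Finset.Icc (j.1+2) n, (Nat.fib (k-(i.1+1)) : ℝ) * (Nat.fib (k-(j.1+1)) : ℝ) := by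
    rw [Finset.mul_sum]
    refine Finset.sum_nbij' (fun k => k + 1) (fun k => k - 1) ?_ ?_ ?_ ?_ ?_
    · intro k hk; simp only [Finset.mem_Icc] at hk ⊢; omega
    · intro k hk; simp only [Finset.mem_Icc] at hk ⊢; omega
    · intro k hk; simp only [Finset.mem_Icc] at hk; show k + 1 - 1 = k; omega
    · intro k hk; simp only [Finset.mem_Icc] at hk; show k - 1 + 1 = k; omega
    · intro k hk
      simp only [Finset.mem_Icc] at hk
      have hkn : k < n := by omega
      rw [dif_pos hkn]
      have h1 : Lm n ⟨k, hkn⟩ i = (-1:ℝ)^(k-i.1) * G (k-i.1) := if_pos (by simp; omega)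
      have h2 : Lm n ⟨k, hkn⟩ j = (-1:ℝ)^(k-j.1) * G (k-j.1) := if_pos (by simp; omega)
      rw [h1, h2]
      have hsign : (-1:ℝ)^(k-i.1) * (-1:ℝ)^(k-j.1) = (-1:ℝ)^(j.1-i.1) := by
        rw [← pow_add, show (k-i.1) + (k-j.1) = (j.1-i.1) + 2*(k-j.1) by omega,
          pow_add, pow_mul]
        norm_num
      have hg1 : G (k-i.1) = (Nat.fib (k+1-(i.1+1)) : ℝ) := by
        rw [G_pos_eq _ (by omega), show k+1-(i.1+1) = k-i.1 by omega]
      have hg2 : G (k-j.1) = (Nat.fib (k+1-(j.1+1)) : ℝ) := by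
        rw [G_pos_eq _ (by omega), show k+1-(j.1+1) = k-j.1 by omega]
      calc (-1:ℝ)^(k-i.1) * G (k-i.1) * ((-1:ℝ)^(k-j.1) * G (k-j.1))
          = ((-1:ℝ)^(k-i.1) * (-1:ℝ)^(k-j.1)) * (G (k-i.1) * G (k-j.1)) := by ring
        _ = (-1:ℝ)^(j.1-i.1) * ((Nat.fib (k+1-(i.1+1)) : ℝ) * (Nat.fib (k+1-(j.1+1)) : ℝ)) := by
            rw [hsign, hg1, hg2]
  rw [hrest]
  ring

lemma Z_eq_LtL (n : ℕ) : Z n = (Lm n)ᵀ * Lm n := by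
  ext i j
  rw [Matrix.mul_apply]
  simp only [Matrix.transpose_apply]
  rcases lt_trichotomy i j with h | h | h
  · have hij : i.1 ≤ j.1 := le_of_lt h
    rw [Hsum n i j hij]
    unfold Z
    rw [if_neg (Fin.ne_of_lt h), if_pos h, G_pos_eq _ (by have := Fin.lt_def.mp h; omega)]
  · subst h
    rw [Hsum n i i le_rfl]
    unfold Z
    rw [if_pos rfl]
    simp only [Nat.sub_self, pow_zero, one_mul, G_zero]
    congr 1
    exact Finset.sum_congr rfl fun k _ => sq _
  · have hji : j.1 ≤ i.1 := le_of_lt h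
    have : ∑ k : Fin n, Lm n k i * Lm n k j = ∑ k : Fin n, Lm n k j * Lm n k i :=
      Finset.sum_congr rfl fun k _ => mul_comm _ _
    rw [this, Hsum n j i hji]
    unfold Z
    rw [if_neg (Fin.ne_of_gt h), if_neg (not_lt_of_gt h),
      G_pos_eq _ (by have := Fin.lt_def.mp h; omega)]
    congr 1
    congr 1
    exact Finset.sum_congr rfl fun k _ => mul_comm _ _

lemma fin_sum_dite' {n : ℕ} (f : Fin n → ℝ) :
    ∑ k : Fin n, f k = ∑ k ∈ Finset.range n, (if h : k < n then f ⟨k, h⟩ else 0) := by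
  rw [← Fin.sum_univ_eq_sum_range (fun k => if h : k < n then f ⟨k, h⟩ else 0) n]
  exact Finset.sum_congr rfl fun k _ => by rw [dif_pos k.isLt]

section KFacts
variable {n : ℕ} (X : Matrix (Fin n) (Fin n) ℝ)

lemma K_bt (hX : X ∈ K n) : X.BlockTriangular OrderDual.toDual := fun i j h => hX.1 i j h

lemma K_det_unit (hX : X ∈ K n) : IsUnit X.det := isUnit_iff_ne_zero.mpr hX.2.2

lemma K_diag (hX : X ∈ K n) : ∀ i : Fin n, X i i = 1 := by
  intro i
  have hdet := Matrix.det_of_lowerTriangular X (K_bt X hX)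
  rcases hX.2.1 i i with h | h
  · exfalso
    apply hX.2.2
    rw [hdet]
    exact Finset.prod_eq_zero (Finset.mem_univ i) h
  · exact h

lemma K_inv_bt (hX : X ∈ K n) : X⁻¹.BlockTriangular OrderDual.toDual := by
  haveI := X.invertibleOfIsUnitDet (K_det_unit X hX)
  exact Matrix.blockTriangular_inv_of_blockTriangular (K_bt X hX)

lemma K_mul_inv (hX : X ∈ K n) : X * X⁻¹ = 1 := Matrix.mul_nonsing_inv X (K_det_unit X hX)

lemma K_inv_diag (hX : X ∈ K n) : ∀ i : Fin n, X⁻¹ i i = 1 := by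
  intro i
  have h1 : (X * X⁻¹) i i = 1 := by rw [K_mul_inv X hX]; exact Matrix.one_apply_eq i
  rw [Matrix.mul_apply, Finset.sum_eq_single i] at h1
  · rwa [K_diag X hX, one_mul] at h1
  · intro k _ hk
    rcases lt_or_gt_of_ne hk with h | h
    · rw [K_inv_bt X hX (show OrderDual.toDual i < OrderDual.toDual k from h), mul_zero]
    · rw [hX.1 i k h, zero_mul]
  · intro h; exact absurd (Finset.mem_univ i) h

end KFacts

lemma inv_entry_bound {n : ℕ} (X : Matrix (Fin n) (Fin n) ℝ) (hX : X ∈ K n) (j : Fin n) :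
    ∀ m : ℕ, 1 ≤ m → ∀ (h : j.1 + m < n), |X⁻¹ ⟨j.1 + m, h⟩ j| ≤ (Nat.fib m : ℝ) := by
  set s : ℕ → ℝ := fun m => if h : j.1 + m < n then X⁻¹ ⟨j.1 + m, h⟩ j else 0 with hs
  set P : ℕ → ℝ := fun m => ∑ t ∈ Finset.range (m+1), max (s t) 0 with hP
  set N : ℕ → ℝ := fun m => ∑ t ∈ Finset.range (m+1), max (-(s t)) 0 with hN
  have hs0 : s 0 = 1 := by
    rw [hs]
    dsimp only
    rw [dif_pos (show j.1 + 0 < n by omega)]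
    rw [show (⟨j.1+0, by omega⟩ : Fin n) = j from Fin.ext (by simp)]
    exact K_inv_diag X hX j
  -- the recurrence
  have hrec : ∀ m : ℕ, (hmn : j.1 + (m+1) < n) → ∃ x : ℕ → ℝ,
      (∀ t, 0 ≤ x t ∧ x t ≤ 1) ∧ s (m+1) = -∑ t ∈ Finset.range (m+1), x t * s t := by
    intro m hmn
    set i' : Fin n := ⟨j.1 + (m+1), hmn⟩ with hi'
    refine ⟨fun t => if h : j.1 + t < n then X i' ⟨j.1 + t, h⟩ else 0, ?_, ?_⟩
    · intro t
      by_cases h : j.1 + t < n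
      · dsimp only
        rw [dif_pos h]
        rcases hX.2.1 i' ⟨j.1 + t, h⟩ with h2 | h2 <;> rw [h2] <;> norm_num
      · dsimp only
        rw [dif_neg h]; norm_num
    · have h0 : (X * X⁻¹) i' j = 0 := by
        rw [K_mul_inv X hX]
        exact Matrix.one_apply_ne (Fin.ne_of_val_ne (show j.1 + (m+1) ≠ j.1 by omega))
      rw [Matrix.mul_apply, fin_sum_dite' (fun k => X i' k * X⁻¹ k j)] at h0
      have hsub : ∑ k ∈ Finset.range n, (if h : k < n then X i' ⟨k,h⟩ * X⁻¹ ⟨k,h⟩ j else 0)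
          = ∑ k ∈ Finset.Icc j.1 (j.1+(m+1)),
              (if h : k < n then X i' ⟨k,h⟩ * X⁻¹ ⟨k,h⟩ j else 0) := by
        refine (Finset.sum_subset ?_ ?_).symm
        · intro k hk; simp only [Finset.mem_Icc] at hk; exact Finset.mem_range.mpr (by omega)
        · intro k hk hk2
          simp only [Finset.mem_Icc, not_and_or, not_le] at hk2
          have hkn := Finset.mem_range.mp hk
          rw [dif_pos hkn]
          rcases hk2 with h | h
          · rw [K_inv_bt X hX (show OrderDual.toDual j < OrderDual.toDual (⟨k,hkn⟩ : Fin n)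
              from by
                show (⟨k, hkn⟩ : Fin n) < j
                rw [Fin.lt_def]; exact h), mul_zero]
          · rw [hX.1 i' ⟨k,hkn⟩ (by rw [Fin.lt_def]; simpa [hi'] using h), zero_mul]
      rw [hsub] at h0
      have hins : Finset.Icc j.1 (j.1+(m+1)) = insert (j.1+(m+1)) (Finset.Icc j.1 (j.1+m)) := by
        ext t; simp only [Finset.mem_Icc, Finset.mem_insert]; omega
      rw [hins, Finset.sum_insert (by simp), dif_pos hmn] at h0
      have hdiag : X i' ⟨j.1+(m+1), hmn⟩ = 1 := K_diag X hX i'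
      rw [hdiag, one_mul] at h0
      have hAs : X⁻¹ ⟨j.1+(m+1), hmn⟩ j = s (m+1) := by rw [hs]; dsimp only; rw [dif_pos hmn]
      rw [hAs] at h0
      have hIco : ∑ k ∈ Finset.Icc j.1 (j.1+m), (if h : k < n then X i' ⟨k,h⟩ * X⁻¹ ⟨k,h⟩ j else 0)
          = ∑ t ∈ Finset.range (m+1),
              (if h : j.1 + t < n then X i' ⟨j.1+t, h⟩ else 0) * s t := by
        refine Finset.sum_nbij' (fun k => k - j.1) (fun t => t + j.1) ?_ ?_ ?_ ?_ ?_
        · intro k hk; simp only [Finset.mem_Icc] at hk; simp only [Finset.mem_range]; omega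
        · intro t ht; simp only [Finset.mem_range] at ht; simp only [Finset.mem_Icc]; omega
        · intro k hk; simp only [Finset.mem_Icc] at hk; show k - j.1 + j.1 = k; omega
        · intro t ht; simp only [Finset.mem_range] at ht; show t + j.1 - j.1 = t; omega
        · intro k hk
          simp only [Finset.mem_Icc] at hk
          have hkn : k < n := by omega
          rw [dif_pos hkn]
          have e1 : j.1 + (k - j.1) < n := by omega
          rw [dif_pos e1, hs]
          dsimp only
          rw [dif_pos e1]
          have e2 : (⟨j.1 + (k - j.1), e1⟩ : Fin n) = ⟨k, hkn⟩ := Fin.ext (by simp; omega)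
          rw [e2]
      rw [hIco] at h0
      linarith
  -- bounds on the recurrence sum
  have hseq : ∀ m : ℕ, (j.1 + (m+1) < n) → s (m+1) ≤ N m ∧ -(s (m+1)) ≤ P m := by
    intro m hmn
    obtain ⟨x, hx01, hr⟩ := hrec m hmn
    have hub : ∑ t ∈ Finset.range (m+1), x t * s t ≤ P m := by
      refine Finset.sum_le_sum fun t _ => ?_
      rcases le_or_gt 0 (s t) with h | h
      · calc x t * s t ≤ 1 * s t := mul_le_mul_of_nonneg_right (hx01 t).2 h
          _ = s t := one_mul _
          _ ≤ max (s t) 0 := le_max_left _ _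
      · calc x t * s t ≤ 0 := mul_nonpos_of_nonneg_of_nonpos (hx01 t).1 (le_of_lt h)
          _ ≤ max (s t) 0 := le_max_right _ _
    have hlb : -(N m) ≤ ∑ t ∈ Finset.range (m+1), x t * s t := by
      rw [hN]
      dsimp only
      rw [← Finset.sum_neg_distrib]
      refine Finset.sum_le_sum fun t _ => ?_
      rcases le_or_gt 0 (s t) with h | h
      · calc -max (-(s t)) 0 ≤ 0 := by simp [le_max_right]
          _ ≤ x t * s t := mul_nonneg (hx01 t).1 h
      · calc -max (-(s t)) 0 ≤ -(-(s t)) := by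
              simp only [neg_le_neg_iff]
              exact le_max_left _ _
          _ = s t := neg_neg _
          _ ≤ x t * s t := by
              calc s t = 1 * s t := (one_mul _).symm
                _ ≤ x t * s t := mul_le_mul_of_nonpos_right (hx01 t).2 (le_of_lt h)
      
    constructor
    · rw [hr]; linarith
    · rw [hr]; linarith
  -- the invariant
  have Inv : ∀ m : ℕ, P m ≤ (Nat.fib (m+1) : ℝ) ∧ N m ≤ (Nat.fib (m+1) : ℝ) ∧
      P m + N m ≤ (Nat.fib (m+2) : ℝ) := by
    intro m
    induction m with
    | zero =>
      have hP0 : P 0 = 1 := by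
        rw [hP]; dsimp only; rw [Finset.sum_range_one, hs0]; norm_num
      have hN0 : N 0 = 0 := by
        rw [hN]; dsimp only; rw [Finset.sum_range_one, hs0]; norm_num
      rw [hP0, hN0]
      norm_num [Nat.fib_one]
    | succ m ih =>
      obtain ⟨ihP, ihN, ihPN⟩ := ih
      have hfib3 : (Nat.fib (m+3) : ℝ) = (Nat.fib (m+2) : ℝ) + (Nat.fib (m+1) : ℝ) := by
        rw [show m+3 = (m+1)+2 by ring, Nat.fib_add_two]; push_cast; ring
      have hmono : (Nat.fib (m+1) : ℝ) ≤ (Nat.fib (m+2) : ℝ) :=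
        Nat.cast_le.mpr Nat.fib_le_fib_succ
      have hPsucc : P (m+1) = P m + max (s (m+1)) 0 := by
        rw [hP]; dsimp only; rw [Finset.sum_range_succ]
      have hNsucc : N (m+1) = N m + max (-(s (m+1))) 0 := by
        rw [hN]; dsimp only; rw [Finset.sum_range_succ]
      by_cases hmn : j.1 + (m+1) < n
      · obtain ⟨hup, hdown⟩ := hseq m hmn
        have hPnonneg : 0 ≤ P m := Finset.sum_nonneg fun t _ => le_max_right _ _
        have hNnonneg : 0 ≤ N m := Finset.sum_nonneg fun t _ => le_max_right _ _
        rcases le_or_gt 0 (s (m+1)) with h | h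
        · have h1 : max (s (m+1)) 0 = s (m+1) := max_eq_left h
          have h2 : max (-(s (m+1))) 0 = 0 := max_eq_right (by linarith)
          rw [hPsucc, hNsucc, h1, h2]
          refine ⟨by linarith, by linarith, by linarith⟩
        · have h1 : max (s (m+1)) 0 = 0 := max_eq_right (le_of_lt h)
          have h2 : max (-(s (m+1))) 0 = -(s (m+1)) := max_eq_left (by linarith)
          rw [hPsucc, hNsucc, h1, h2]
          refine ⟨by linarith, by linarith, by linarith⟩
      · have h0 : s (m+1) = 0 := by rw [hs]; dsimp only; rw [dif_neg hmn]
        rw [hPsucc, hNsucc, h0]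
        norm_num
        refine ⟨by linarith, by linarith, by linarith⟩
  -- conclusion
  intro m hm hmn
  obtain ⟨x, hx01, hr⟩ := hrec (m-1) (by omega)
  have hms : m - 1 + 1 = m := by omega
  rw [hms] at hr
  obtain ⟨hup, hdown⟩ := hseq (m-1) (by rw [hms]; exact hmn)
  rw [hms] at hup hdown
  obtain ⟨ihP, ihN, -⟩ := Inv (m-1)
  have hmm : m - 1 + 1 = m := hms
  rw [hmm] at ihP ihN
  have hsm : s m = X⁻¹ ⟨j.1 + m, hmn⟩ j := by rw [hs]; dsimp only; rw [dif_pos hmn]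
  rw [← hsm]
  rw [abs_le]
  constructor
  · linarith
  · linarith

lemma dotmv_left {n : ℕ} (M : Matrix (Fin n) (Fin n) ℝ) (x y : Fin n → ℝ) :
    (M.mulVec x) ⬝ᵥ y = x ⬝ᵥ (Mᵀ.mulVec y) := by
  calc (M.mulVec x) ⬝ᵥ y = y ⬝ᵥ (M.mulVec x) := dotProduct_comm _ _
    _ = (Matrix.vecMul y M) ⬝ᵥ x := Matrix.dotProduct_mulVec _ _ _
    _ = (Mᵀ.mulVec y) ⬝ᵥ x := by rw [Matrix.mulVec_transpose]
    _ = x ⬝ᵥ (Mᵀ.mulVec y) := dotProduct_comm _ _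

lemma dot_self_nonneg {n : ℕ} (x : Fin n → ℝ) : 0 ≤ x ⬝ᵥ x :=
  Finset.sum_nonneg fun i _ => mul_self_nonneg (x i)

lemma dot_self_pos {n : ℕ} {x : Fin n → ℝ} (hx : x ≠ 0) : 0 < x ⬝ᵥ x := by
  rcases lt_or_eq_of_le (dot_self_nonneg x) with h | h
  · exact h
  · exact absurd (dotProduct_self_eq_zero.mp h.symm) hx

lemma dot_sq_mono {n : ℕ} {x y : Fin n → ℝ} (h : ∀ i, |x i| ≤ y i) : x ⬝ᵥ x ≤ y ⬝ᵥ y := by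
  refine Finset.sum_le_sum fun i _ => ?_
  calc x i * x i = |x i| * |x i| := (abs_mul_abs_self _).symm
    _ ≤ y i * y i := mul_self_le_mul_self (abs_nonneg _) (h i)

lemma inv_abs_le_Fm {n : ℕ} (X : Matrix (Fin n) (Fin n) ℝ) (hX : X ∈ K n) (a b : Fin n) :
    |X⁻¹ a b| ≤ Fm n a b := by
  rcases lt_trichotomy a b with h | h | h
  · have h0 : X⁻¹ a b = 0 := K_inv_bt X hX (show OrderDual.toDual b < OrderDual.toDual a from h)
    rw [h0, abs_zero]
    unfold Fm
    rw [if_neg (by rw [Fin.lt_def] at h; omega)]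
  · subst h
    rw [K_inv_diag X hX a]
    unfold Fm
    rw [if_pos le_rfl]
    simp [G_zero]
  · have hba : b.1 < a.1 := Fin.lt_def.mp h
    have hm : b.1 + (a.1 - b.1) < n := by have := a.isLt; omega
    have := inv_entry_bound X hX b (a.1 - b.1) (by omega) hm
    rw [show (⟨b.1 + (a.1 - b.1), hm⟩ : Fin n) = a from Fin.ext (by simp; omega)] at this
    unfold Fm
    rw [if_pos (le_of_lt hba)]
    rw [G_pos_eq _ (by omega)]
    exact this

lemma Dm_transpose (n : ℕ) : (Dm n)ᵀ = Dm n := Matrix.diagonal_transpose _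

lemma Ym_mem_K (n : ℕ) : Ym n ∈ K n := by
  refine ⟨?_, ?_, ?_⟩
  · intro i j hij
    exact if_neg (by rw [Fin.lt_def] at hij; omega)
  · intro i j
    unfold Ym
    split
    · right; rfl
    · left; rfl
  · have h := congrArg Matrix.det (Ym_mul_Lm n)
    rw [Matrix.det_mul, Matrix.det_one] at h
    exact left_ne_zero_of_mul_eq_one h

theorem stmt_3 (n : ℕ) (hn : 0 < n) : c n = (specNorm (Z n))⁻¹ := by
  have hZL : Z n = (Lm n)ᵀ * Lm n := Z_eq_LtL n
  have hZsym : (Z n)ᵀ = Z n := by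
    rw [hZL, Matrix.transpose_mul, Matrix.transpose_transpose]
  obtain ⟨L, hLeig, hLray, hLmax⟩ := sym_eigen_max hn (Z n) hZsym
  have hPSD : ∀ μ : ℝ, HasEigen (Z n) μ → 0 ≤ μ := by
    rintro μ ⟨v, hv0, hv⟩
    have h1 : ((Z n).mulVec v) ⬝ᵥ v = ((Lm n).mulVec v) ⬝ᵥ ((Lm n).mulVec v) := by
      rw [hZL, ← Matrix.mulVec_mulVec, dotmv_left, Matrix.transpose_transpose]
    rw [hv, smul_dotProduct, smul_eq_mul] at h1
    nlinarith [dot_self_pos hv0, dot_self_nonneg ((Lm n).mulVec v)]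
  have hL1 : (1:ℝ) ≤ L := by
    set z : Fin n := ⟨0, hn⟩ with hz
    set e0 : Fin n → ℝ := fun k => if k = z then 1 else 0 with he0
    have h1 : ∀ y : Fin n → ℝ, y ⬝ᵥ e0 = y z := by
      intro y
      show (∑ k, y k * e0 k) = y z
      rw [Finset.sum_eq_single z]
      · rw [he0]; simp
      · intro k _ hk; rw [he0]; simp [hk]
      · intro h; exact absurd (Finset.mem_univ z) h
    have he : e0 ⬝ᵥ e0 = 1 := by rw [h1]; rw [he0]; simp
    have h2 : ((Z n).mulVec e0) ⬝ᵥ e0 = Z n z z := by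
      rw [h1]
      show (Z n z) ⬝ᵥ e0 = Z n z z
      rw [h1]
    have h3 : (1:ℝ) ≤ Z n z z := by
      show (1:ℝ) ≤ (if z = z then
        1 + ∑ k ∈ Finset.Icc (z.1 + 2) n, ((Nat.fib (k - (z.1 + 1)) : ℝ)) ^ 2 else _)
      rw [if_pos rfl]
      have : (0:ℝ) ≤ ∑ k ∈ Finset.Icc (z.1 + 2) n, ((Nat.fib (k - (z.1 + 1)) : ℝ)) ^ 2 :=
        Finset.sum_nonneg fun k _ => sq_nonneg _
      linarith
    have h4 := hLray e0
    rw [h2, he, mul_one] at h4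
    linarith
  have hL0 : (0:ℝ) < L := lt_of_lt_of_le zero_lt_one hL1
  have hTbound : ∀ x ∈ {s : ℝ | ∃ μ : ℝ, HasEigen ((Z n)ᵀ * Z n) μ ∧ s = Real.sqrt μ},
      x ≤ L := by
    rintro x ⟨μ, ⟨v, hv0, hv⟩, rfl⟩
    rw [hZsym] at hv
    have hZZv : (Z n).mulVec ((Z n).mulVec v) = μ • v := by
      rw [Matrix.mulVec_mulVec]; exact hv
    have hq : ((Z n).mulVec v) ⬝ᵥ ((Z n).mulVec v) = μ * (v ⬝ᵥ v) := by
      have e1 : ((Z n).mulVec ((Z n).mulVec v)) ⬝ᵥ v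
          = ((Z n).mulVec v) ⬝ᵥ ((Z n)ᵀ.mulVec v) := dotmv_left _ _ _
      rw [hZZv, hZsym, smul_dotProduct, smul_eq_mul] at e1
      exact e1.symm
    have hμ0 : 0 ≤ μ := by
      nlinarith [dot_self_pos hv0, dot_self_nonneg ((Z n).mulVec v), hq]
    have hrr : Real.sqrt μ * Real.sqrt μ = μ := Real.mul_self_sqrt hμ0
    have hr0 : 0 ≤ Real.sqrt μ := Real.sqrt_nonneg μ
    by_cases hu0 : (Z n).mulVec v + Real.sqrt μ • v = 0
    · have hzv : (Z n).mulVec v = (-(Real.sqrt μ)) • v := by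
        rw [neg_smul]
        exact eq_neg_of_add_eq_zero_left hu0
      have hps := hPSD (-(Real.sqrt μ)) ⟨v, hv0, hzv⟩
      have : Real.sqrt μ = 0 := le_antisymm (by linarith) hr0
      rw [this]; linarith
    · have heig : HasEigen (Z n) (Real.sqrt μ) := by
        refine ⟨_, hu0, ?_⟩
        rw [Matrix.mulVec_add, Matrix.mulVec_smul, hZZv, smul_add, smul_smul, hrr]
        abel
      exact hLmax _ heig
  have hTmem : L ∈ {s : ℝ | ∃ μ : ℝ, HasEigen ((Z n)ᵀ * Z n) μ ∧ s = Real.sqrt μ} := by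
    obtain ⟨v, hv0, hv⟩ := hLeig
    refine ⟨L * L, ⟨v, hv0, ?_⟩, ?_⟩
    · rw [hZsym, ← Matrix.mulVec_mulVec, hv, Matrix.mulVec_smul, hv, smul_smul]
    · rw [Real.sqrt_mul_self hL0.le]
  have hspec : specNorm (Z n) = L := by
    unfold specNorm
    exact le_antisymm (csSup_le ⟨L, hTmem⟩ hTbound) (le_csSup ⟨L, hTbound⟩ hTmem)
  -- the F F^T comparison
  have hFsym : (Fm n * (Fm n)ᵀ)ᵀ = Fm n * (Fm n)ᵀ := by
    rw [Matrix.transpose_mul, Matrix.transpose_transpose]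
  obtain ⟨ν, hνeig, hνray, -⟩ := sym_eigen_max hn (Fm n * (Fm n)ᵀ) hFsym
  have hZD : Z n = Dm n * ((Fm n)ᵀ * Fm n) * Dm n := by
    rw [hZL, Lm_eq_DFD]
    rw [Matrix.transpose_mul, Matrix.transpose_mul, Dm_transpose]
    simp only [Matrix.mul_assoc]
    rw [show Dm n * (Dm n * (Fm n * Dm n)) = (Dm n * Dm n) * (Fm n * Dm n) from
      (Matrix.mul_assoc _ _ _).symm, Dm_mul_Dm, Matrix.one_mul]
  have hνL : ν ≤ L := by
    rcases le_or_gt ν 0 with h | h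
    · linarith
    · obtain ⟨p, hp0, hp⟩ := hνeig
      have hq : ((Fm n)ᵀ * Fm n).mulVec ((Fm n)ᵀ.mulVec p) = ν • ((Fm n)ᵀ.mulVec p) := by
        calc ((Fm n)ᵀ * Fm n).mulVec ((Fm n)ᵀ.mulVec p)
            = (((Fm n)ᵀ * Fm n) * (Fm n)ᵀ).mulVec p := Matrix.mulVec_mulVec _ _ _
          _ = ((Fm n)ᵀ * (Fm n * (Fm n)ᵀ)).mulVec p := by rw [Matrix.mul_assoc]
          _ = (Fm n)ᵀ.mulVec ((Fm n * (Fm n)ᵀ).mulVec p) := (Matrix.mulVec_mulVec _ _ _).symm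
          _ = (Fm n)ᵀ.mulVec (ν • p) := by rw [hp]
          _ = ν • ((Fm n)ᵀ.mulVec p) := Matrix.mulVec_smul _ _ _
      have hq0 : (Fm n)ᵀ.mulVec p ≠ 0 := by
        intro h0
        have h2 : (Fm n * (Fm n)ᵀ).mulVec p = 0 := by
          rw [← Matrix.mulVec_mulVec, h0, Matrix.mulVec_zero]
        rw [hp] at h2
        exact hp0 (by simpa [smul_eq_zero, ne_of_gt h] using h2)
      have heigZ : HasEigen (Z n) ν := by
        refine ⟨(Dm n).mulVec ((Fm n)ᵀ.mulVec p), ?_, ?_⟩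
        · intro h0
          apply hq0
          have h3 : (Dm n).mulVec ((Dm n).mulVec ((Fm n)ᵀ.mulVec p))
              = (Fm n)ᵀ.mulVec p := by
            rw [Matrix.mulVec_mulVec, Dm_mul_Dm, Matrix.one_mulVec]
          rw [h0, Matrix.mulVec_zero] at h3
          exact h3.symm
        · rw [hZD]
          calc (Dm n * ((Fm n)ᵀ * Fm n) * Dm n).mulVec ((Dm n).mulVec ((Fm n)ᵀ.mulVec p))
              = ((Dm n * ((Fm n)ᵀ * Fm n) * Dm n) * Dm n).mulVec ((Fm n)ᵀ.mulVec p) :=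
                Matrix.mulVec_mulVec _ _ _
            _ = (Dm n * ((Fm n)ᵀ * Fm n)).mulVec ((Fm n)ᵀ.mulVec p) := by
                rw [Matrix.mul_assoc (Dm n * ((Fm n)ᵀ * Fm n)) (Dm n) (Dm n), Dm_mul_Dm,
                  Matrix.mul_one]
            _ = (Dm n).mulVec (((Fm n)ᵀ * Fm n).mulVec ((Fm n)ᵀ.mulVec p)) :=
                (Matrix.mulVec_mulVec _ _ _).symm
            _ = (Dm n).mulVec (ν • ((Fm n)ᵀ.mulVec p)) := by rw [hq]
            _ = ν • ((Dm n).mulVec ((Fm n)ᵀ.mulVec p)) := Matrix.mulVec_smul _ _ _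
      exact hLmax ν heigZ
  have hkey : ∀ u : Fin n → ℝ,
      ((Fm n)ᵀ.mulVec u) ⬝ᵥ ((Fm n)ᵀ.mulVec u) ≤ L * (u ⬝ᵥ u) := by
    intro u
    have e1 : ((Fm n * (Fm n)ᵀ).mulVec u) ⬝ᵥ u
        = ((Fm n)ᵀ.mulVec u) ⬝ᵥ ((Fm n)ᵀ.mulVec u) := by
      rw [← Matrix.mulVec_mulVec, dotmv_left]
    calc ((Fm n)ᵀ.mulVec u) ⬝ᵥ ((Fm n)ᵀ.mulVec u)
        = ((Fm n * (Fm n)ᵀ).mulVec u) ⬝ᵥ u := e1.symm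
      _ ≤ ν * (u ⬝ᵥ u) := hνray u
      _ ≤ L * (u ⬝ᵥ u) := mul_le_mul_of_nonneg_right hνL (dot_self_nonneg u)
  have hlow : ∀ μ ∈ {μ : ℝ | ∃ X ∈ K n, HasEigen (X * Xᵀ) μ}, L⁻¹ ≤ μ := by
    rintro μ ⟨X, hXK, v, hv0, hv⟩
    have hdetT : IsUnit Xᵀ.det := by
      rw [Matrix.det_transpose]; exact K_det_unit X hXK
    have hvw : (X⁻¹)ᵀ.mulVec (Xᵀ.mulVec v) = v := by
      rw [Matrix.transpose_nonsing_inv, Matrix.mulVec_mulVec,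
        Matrix.nonsing_inv_mul _ hdetT, Matrix.one_mulVec]
    have hw0 : Xᵀ.mulVec v ≠ 0 := fun h0 => hv0 (by rw [← hvw, h0, Matrix.mulVec_zero])
    have hμvv : μ * (v ⬝ᵥ v) = (Xᵀ.mulVec v) ⬝ᵥ (Xᵀ.mulVec v) := by
      have e1 : ((X * Xᵀ).mulVec v) ⬝ᵥ v = (Xᵀ.mulVec v) ⬝ᵥ (Xᵀ.mulVec v) := by
        rw [← Matrix.mulVec_mulVec, dotmv_left X (Xᵀ.mulVec v) v]
      rw [hv, smul_dotProduct, smul_eq_mul] at e1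
      exact e1
    have habs : ∀ i, |((X⁻¹)ᵀ.mulVec (Xᵀ.mulVec v)) i|
        ≤ ((Fm n)ᵀ.mulVec (fun k => |(Xᵀ.mulVec v) k|)) i := by
      intro i
      show |∑ j, X⁻¹ j i * (Xᵀ.mulVec v) j| ≤ ∑ j, Fm n j i * |(Xᵀ.mulVec v) j|
      calc |∑ j, X⁻¹ j i * (Xᵀ.mulVec v) j| ≤ ∑ j, |X⁻¹ j i * (Xᵀ.mulVec v) j| :=
            Finset.abs_sum_le_sum_abs _ _
        _ ≤ ∑ j, Fm n j i * |(Xᵀ.mulVec v) j| := Finset.sum_le_sum fun j _ => by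
            rw [abs_mul]
            exact mul_le_mul_of_nonneg_right (inv_abs_le_Fm X hXK j i) (abs_nonneg _)
    have e2 : (fun k => |(Xᵀ.mulVec v) k|) ⬝ᵥ (fun k => |(Xᵀ.mulVec v) k|)
        = (Xᵀ.mulVec v) ⬝ᵥ (Xᵀ.mulVec v) := by
      simp [dotProduct, abs_mul_abs_self]
    have hvvle : v ⬝ᵥ v ≤ L * ((Xᵀ.mulVec v) ⬝ᵥ (Xᵀ.mulVec v)) := by
      calc v ⬝ᵥ v = ((X⁻¹)ᵀ.mulVec (Xᵀ.mulVec v)) ⬝ᵥ ((X⁻¹)ᵀ.mulVec (Xᵀ.mulVec v)) := by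
            rw [hvw]
        _ ≤ ((Fm n)ᵀ.mulVec (fun k => |(Xᵀ.mulVec v) k|))
              ⬝ᵥ ((Fm n)ᵀ.mulVec (fun k => |(Xᵀ.mulVec v) k|)) := dot_sq_mono habs
        _ ≤ L * ((fun k => |(Xᵀ.mulVec v) k|) ⬝ᵥ (fun k => |(Xᵀ.mulVec v) k|)) := hkey _
        _ = L * ((Xᵀ.mulVec v) ⬝ᵥ (Xᵀ.mulVec v)) := by rw [e2]
    have hvv := dot_self_pos hv0
    have hww := dot_self_pos hw0
    rw [inv_eq_one_div, div_le_iff₀ hL0]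
    nlinarith [hμvv, hvvle]
  have hmem : L⁻¹ ∈ {μ : ℝ | ∃ X ∈ K n, HasEigen (X * Xᵀ) μ} := by
    obtain ⟨v, hv0, hv⟩ := hLeig
    refine ⟨Ym n, Ym_mem_K n, v, hv0, ?_⟩
    have hLY : Lm n * Ym n = 1 := mul_eq_one_comm.mp (Ym_mul_Lm n)
    have hYZ : (Ym n * (Ym n)ᵀ) * Z n = 1 := by
      rw [hZL]
      calc Ym n * (Ym n)ᵀ * ((Lm n)ᵀ * Lm n)
          = Ym n * (((Ym n)ᵀ * (Lm n)ᵀ) * Lm n) := by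
            rw [Matrix.mul_assoc, ← Matrix.mul_assoc (Ym n)ᵀ (Lm n)ᵀ (Lm n)]
        _ = Ym n * ((Lm n * Ym n)ᵀ * Lm n) := by rw [Matrix.transpose_mul]
        _ = Ym n * Lm n := by rw [hLY, Matrix.transpose_one, Matrix.one_mul]
        _ = 1 := Ym_mul_Lm n
    have hv2 : v = L • ((Ym n * (Ym n)ᵀ).mulVec v) := by
      calc v = ((Ym n * (Ym n)ᵀ) * Z n).mulVec v := by rw [hYZ, Matrix.one_mulVec]
        _ = (Ym n * (Ym n)ᵀ).mulVec ((Z n).mulVec v) := (Matrix.mulVec_mulVec _ _ _).symm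
        _ = (Ym n * (Ym n)ᵀ).mulVec (L • v) := by rw [hv]
        _ = L • ((Ym n * (Ym n)ᵀ).mulVec v) := Matrix.mulVec_smul _ _ _
    show (Ym n * (Ym n)ᵀ).mulVec v = L⁻¹ • v
    conv_rhs => rw [hv2]
    rw [smul_smul, inv_mul_cancel₀ (ne_of_gt hL0), one_smul]
  have hC : c n = L⁻¹ := by
    unfold c
    exact le_antisymm (csInf_le ⟨L⁻¹, fun x hx => hlow x hx⟩ hmem)
      (le_csInf ⟨L⁻¹, hmem⟩ hlow)
  rw [hC, hspec]
end

section
/- For every positive integer n, the trace of Z_n equals n + F_n² − (1 − (−1)^n)/2, and equivalently tr(Z_n) = n − 1/2 + (1/5)φ^{2n} + (1/5)φ^{−2n} + (1/10)(−1)^n, where φ = (1+√5)/2 is the golden ratio. -/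
open Matrix

/-- The golden ratio `φ = (1 + √5)/2`. -/
noncomputable def φ : ℝ := (1 + Real.sqrt 5) / 2

lemma sum_fib_sq (M : ℕ) :
    ∑ m ∈ Finset.range M, (Nat.fib (m + 1) : ℝ) ^ 2
      = (Nat.fib M : ℝ) * (Nat.fib (M + 1) : ℝ) := by
  induction M with
  | zero => simp
  | succ M ih =>
      rw [Finset.sum_range_succ, ih, Nat.fib_add_two]
      push_cast
      ring

lemma cassini (n : ℕ) :
    (Nat.fib (n + 1) : ℝ) ^ 2 - (Nat.fib n : ℝ) * (Nat.fib (n + 1) : ℝ)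
      - (Nat.fib n : ℝ) ^ 2 = (-1 : ℝ) ^ n := by
  induction n with
  | zero => simp
  | succ n ih =>
      rw [Nat.fib_add_two]
      push_cast
      rw [pow_succ]
      linear_combination -ih

lemma sum_fib_mul (n : ℕ) :
    ∑ j ∈ Finset.range n, (Nat.fib j : ℝ) * (Nat.fib (j + 1) : ℝ)
      = (Nat.fib n : ℝ) ^ 2 - (1 - (-1 : ℝ) ^ n) / 2 := by
  induction n with
  | zero => norm_num
  | succ n ih =>
      rw [Finset.sum_range_succ, ih]
      have := cassini n
      rw [pow_succ]
      linear_combination -this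

theorem stmt_15 (n : ℕ) (hn : 0 < n) :
    Matrix.trace (Z n) = (n : ℝ) + (Nat.fib n : ℝ) ^ 2 - (1 - (-1 : ℝ) ^ n) / 2 ∧
    Matrix.trace (Z n) = (n : ℝ) - 1 / 2 + (1 / 5) * φ ^ (2 * n)
      + (1 / 5) * (φ ^ (2 * n))⁻¹ + (1 / 10) * (-1 : ℝ) ^ n := by
  have htr : Matrix.trace (Z n)
      = (n : ℝ) + (Nat.fib n : ℝ) ^ 2 - (1 - (-1 : ℝ) ^ n) / 2 := by
    have hdiag : ∀ i : Fin n, Z n i i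
        = 1 + (Nat.fib (n - 1 - i.1) : ℝ) * (Nat.fib (n - i.1) : ℝ) := by
      intro i
      have hi : i.1 < n := i.2
      simp only [Z, if_pos rfl, if_true]
      congr 1
      rw [← Finset.Ico_add_one_right_eq_Icc, Finset.sum_Ico_eq_sum_range]
      have h1 : n + 1 - (i.1 + 2) = n - 1 - i.1 := by omega
      rw [h1]
      have h2 : ∀ m ∈ Finset.range (n - 1 - i.1),
          (Nat.fib (i.1 + 2 + m - (i.1 + 1)) : ℝ) ^ 2 = (Nat.fib (m + 1) : ℝ) ^ 2 := by
        intro m _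
        have : i.1 + 2 + m - (i.1 + 1) = m + 1 := by omega
        rw [this]
      rw [Finset.sum_congr rfl h2, sum_fib_sq]
      have : n - 1 - i.1 + 1 = n - i.1 := by omega
      rw [this]
    rw [Matrix.trace]
    simp only [Matrix.diag]
    rw [Finset.sum_congr rfl (fun i _ => hdiag i), Finset.sum_add_distrib]
    simp only [Finset.sum_const, Finset.card_univ, Fintype.card_fin, nsmul_eq_mul, mul_one]
    have hsum : ∑ i : Fin n, (Nat.fib (n - 1 - i.1) : ℝ) * (Nat.fib (n - i.1) : ℝ)
        = ∑ j ∈ Finset.range n, (Nat.fib j : ℝ) * (Nat.fib (j + 1) : ℝ) := by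
      rw [Fin.sum_univ_eq_sum_range
        (fun j => (Nat.fib (n - 1 - j) : ℝ) * (Nat.fib (n - j) : ℝ)) n]
      rw [← Finset.sum_range_reflect]
      apply Finset.sum_congr rfl
      intro j hj
      simp only [Finset.mem_range] at hj
      have h1 : n - (n - 1 - j) = j + 1 := by omega
      have h2 : n - 1 - (n - 1 - j) = j := by omega
      rw [h1, h2]
    rw [hsum, sum_fib_mul]
    ring
  refine ⟨htr, ?_⟩
  rw [htr]
  have hφ : φ = Real.goldenRatio := rfl
  have hfib : (Nat.fib n : ℝ) = (Real.goldenRatio ^ n - Real.goldenConj ^ n) / Real.sqrt 5 :=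
    Real.coe_fib_eq n
  have h5 : Real.sqrt 5 ^ 2 = 5 := Real.sq_sqrt (by norm_num)
  have hmul : Real.goldenRatio * Real.goldenConj = -1 := Real.goldenRatio_mul_goldenConj
  have hgpos : (0:ℝ) < Real.goldenRatio := Real.goldenRatio_pos
  have hg2 : Real.goldenRatio ^ (2 * n) * Real.goldenConj ^ (2 * n) = 1 := by
    rw [← mul_pow, hmul]
    simp [pow_mul]
  have hinv : Real.goldenConj ^ (2 * n) = (φ ^ (2 * n))⁻¹ := by
    rw [hφ]; exact eq_inv_of_mul_eq_one_left (by rw [mul_comm]; exact hg2)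
  have hmuln : (Real.goldenRatio ^ n) * (Real.goldenConj ^ n) = (-1 : ℝ) ^ n := by
    rw [← mul_pow, hmul]
  have hfib2 : (Nat.fib n : ℝ) ^ 2
      = (Real.goldenRatio ^ (2 * n) + Real.goldenConj ^ (2 * n) - 2 * (-1 : ℝ) ^ n) / 5 := by
    rw [hfib, div_pow, h5, two_mul, pow_add, pow_add]
    rw [← hmuln]
    ring
  rw [hfib2, hφ, ← hφ, ← hinv, hφ]
  ring
end
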